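/- arXiv:1408.3294 — 4 statements merged into one kernel-verified Lean document; each statement's English description precedes it below -/
import Mathlib

section
/- Let p be a positive integer, q ∈ (0,1), t > 0 and 0 < s ≤ 1. Then ψ_{p,q}(s+t) ≥ ψ_{p,q}(s) + ψ_{p,q}(t). -/
open Finset

/-- The (p,q)-analogue of the digamma function,
`ψ_{p,q}(t) = ln [p]_q + (ln q) ∑_{n=1}^p q^{n t}/(1 - q^n)` with `[p]_q = (1-q^p)/(1-q)`. -/
noncomputable def psiPQ (p : ℕ) (q : ℝ) (t : ℝ) : ℝ :=
  Real.log ((1 - q ^ p) / (1 - q)) +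
    Real.log q * ∑ n ∈ Finset.Icc 1 p, q ^ ((n : ℝ) * t) / (1 - q ^ n)

/-!
Write `a = q^{ns}`, `b = q^{nt}` and `c = q^n`. Since `s ≤ 1` we have `c ≤ a`, and with
`0 ≤ b ≤ 1` this gives `c ≤ a + b - ab`, so `ψ_{p,q}(s) + ψ_{p,q}(t) - ψ_{p,q}(s+t)` is at most
`ln [p]_q + ln q · ∑_{n=1}^p q^n/(1-q^n)`. This is `≤ 0`: telescoping,
`ln [p]_q = ∑_{k=1}^{p-1} ln ((1-q^{k+1})/(1-q^k))`, and `ln x ≤ x - 1` bounds the `k`-th term by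
`(1-q) q^k/(1-q^k) ≤ -ln q · q^k/(1-q^k)`.
-/

namespace PsiPQ

variable {q : ℝ}

lemma log_one_sub_pow_succ_div_le (hq0 : 0 < q) (hq1 : q < 1) {k : ℕ} (hk : k ≠ 0) :
    Real.log ((1 - q ^ (k + 1)) / (1 - q ^ k)) ≤ -Real.log q * (q ^ k / (1 - q ^ k)) := by
  have hqk : 0 < 1 - q ^ k := sub_pos.mpr (pow_lt_one₀ hq0.le hq1 hk)
  have hqk1 : 0 < 1 - q ^ (k + 1) := sub_pos.mpr (pow_lt_one₀ hq0.le hq1 k.succ_ne_zero)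
  have hratio : (1 - q ^ (k + 1)) / (1 - q ^ k) = 1 + (1 - q) * (q ^ k / (1 - q ^ k)) := by
    field_simp
    ring
  have hq_log : 1 - q ≤ -Real.log q := by linarith [Real.log_le_sub_one_of_pos hq0]
  calc Real.log ((1 - q ^ (k + 1)) / (1 - q ^ k))
      ≤ (1 - q ^ (k + 1)) / (1 - q ^ k) - 1 := Real.log_le_sub_one_of_pos (by positivity)
    _ = (1 - q) * (q ^ k / (1 - q ^ k)) := by rw [hratio]; ring
    _ ≤ -Real.log q * (q ^ k / (1 - q ^ k)) := by gcongr

lemma log_qNumber_succ_le (hq0 : 0 < q) (hq1 : q < 1) (p : ℕ) :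
    Real.log ((1 - q ^ (p + 1)) / (1 - q)) ≤
      -Real.log q * ∑ n ∈ Icc 1 p, q ^ n / (1 - q ^ n) := by
  induction p with
  | zero => simp [div_self (sub_pos.mpr hq1).ne']
  | succ p ih =>
    have hq : 0 < 1 - q := sub_pos.mpr hq1
    have hp1 : 0 < 1 - q ^ (p + 1) := sub_pos.mpr (pow_lt_one₀ hq0.le hq1 p.succ_ne_zero)
    have hp2 : 0 < 1 - q ^ (p + 2) := sub_pos.mpr (pow_lt_one₀ hq0.le hq1 (by omega))
    have htelescope : Real.log ((1 - q ^ (p + 2)) / (1 - q)) =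
        Real.log ((1 - q ^ (p + 1)) / (1 - q)) +
          Real.log ((1 - q ^ (p + 1 + 1)) / (1 - q ^ (p + 1))) := by
      rw [← Real.log_mul (by positivity) (by positivity)]
      congr 1
      field_simp
    rw [htelescope, sum_Icc_succ_top (by omega), mul_add]
    exact add_le_add ih (log_one_sub_pow_succ_div_le hq0 hq1 p.succ_ne_zero)

lemma log_qNumber_le (hq0 : 0 < q) (hq1 : q < 1) (p : ℕ) :
    Real.log ((1 - q ^ p) / (1 - q)) ≤ -Real.log q * ∑ n ∈ Icc 1 p, q ^ n / (1 - q ^ n) := by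
  cases p with
  | zero => simp -- the left side is `Real.log 0 = 0`
  | succ p =>
    refine (log_qNumber_succ_le hq0 hq1 p).trans ?_
    gcongr ?_ * ?_
    · exact neg_nonneg.mpr (Real.log_nonpos hq0.le hq1.le)
    · refine sum_le_sum_of_subset_of_nonneg (Icc_subset_Icc le_rfl p.le_succ) ?_
      intro n hn _
      have : q ^ n < 1 := pow_lt_one₀ hq0.le hq1 (by simp at hn; omega)
      exact div_nonneg (by positivity) (by linarith)

lemma pow_div_le_rpow_add_sub (hq0 : 0 < q) (hq1 : q < 1) {n : ℕ} (hn : n ≠ 0) {s t : ℝ}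
    (hs : s ≤ 1) (ht : 0 ≤ t) :
    q ^ n / (1 - q ^ n) ≤
      (q ^ ((n : ℝ) * s) + q ^ ((n : ℝ) * t) - q ^ ((n : ℝ) * (s + t))) / (1 - q ^ n) := by
  have hqn : q ^ n < 1 := pow_lt_one₀ hq0.le hq1 hn
  have ha : q ^ n ≤ q ^ ((n : ℝ) * s) := by
    rw [← Real.rpow_natCast]
    exact Real.rpow_le_rpow_of_exponent_ge hq0 hq1.le
      (mul_le_of_le_one_right n.cast_nonneg hs)
  have hb0 : 0 ≤ q ^ ((n : ℝ) * t) := by positivity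
  have hb1 : q ^ ((n : ℝ) * t) ≤ 1 :=
    Real.rpow_le_one hq0.le hq1.le (mul_nonneg n.cast_nonneg ht)
  rw [mul_add, Real.rpow_add hq0]
  gcongr
  nlinarith [mul_nonneg (sub_nonneg.mpr ha) (sub_nonneg.mpr hb1),
    mul_nonneg hb0 (sub_nonneg.mpr hqn.le)]

end PsiPQ

open PsiPQ in
theorem psiPQ_add_ge_general (p : ℕ) (q : ℝ) (hq : q ∈ Set.Ioo (0 : ℝ) 1)
    (s t : ℝ) (ht : 0 < t) (hs1 : s ≤ 1) :
    psiPQ p q (s + t) ≥ psiPQ p q s + psiPQ p q t := by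
  obtain ⟨hq0, hq1⟩ := hq
  have hterms : ∑ n ∈ Icc 1 p, q ^ n / (1 - q ^ n) ≤
      ∑ n ∈ Icc 1 p,
        (q ^ ((n : ℝ) * s) + q ^ ((n : ℝ) * t) - q ^ ((n : ℝ) * (s + t))) / (1 - q ^ n) :=
    sum_le_sum fun n hn ↦
      pow_div_le_rpow_add_sub hq0 hq1 (by simp at hn; omega) hs1 ht.le
  simp only [add_div, sub_div, sum_add_distrib, sum_sub_distrib] at hterms
  have hlog := log_qNumber_le hq0 hq1 p
  have hscaled := mul_le_mul_of_nonneg_left hterms (neg_nonneg.mpr (Real.log_nonpos hq0.le hq1.le))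
  unfold psiPQ
  linarith

theorem psiPQ_add_ge (p : ℕ) (hp : 0 < p) (q : ℝ) (hq : q ∈ Set.Ioo (0 : ℝ) 1)
    (s t : ℝ) (ht : 0 < t) (hs0 : 0 < s) (hs1 : s ≤ 1) :
    psiPQ p q (s + t) ≥ psiPQ p q s + psiPQ p q t :=
  psiPQ_add_ge_general p q hq s t ht hs1
end

section
/- Let p be a positive integer, q ∈ (0,1), s, t > 0, and let m be a positive odd integer. Then ψ_{p,q}^{(m)}(s+t) ≤ ψ_{p,q}^{(m)}(s) + ψ_{p,q}^{(m)}(t). -/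
open Finset

/-- The m-th derivative of the (p,q)-digamma function,
`ψ_{p,q}^{(m)}(t) = (ln q)^{m+1} ∑_{n=1}^p n^m q^{n t}/(1 - q^n)`. -/
noncomputable def psiPQDeriv (p : ℕ) (q : ℝ) (m : ℕ) (t : ℝ) : ℝ :=
  (Real.log q) ^ (m + 1) *
    ∑ n ∈ Finset.Icc 1 p, (n : ℝ) ^ m * q ^ ((n : ℝ) * t) / (1 - q ^ n)

/-!
For odd `m` the prefactor `(ln q)^{m+1}` is a nonnegative even power, and each summand
`n^m q^{nt}/(1 - q^n)` is nonnegative and decreasing in `t` since `0 < q < 1`. Hence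
`ψ(s + t) ≤ ψ(s) ≤ ψ(s) + ψ(t)`.
-/

section

variable {p m : ℕ} {q : ℝ}

theorem one_sub_pow_pos (hq0 : 0 ≤ q) (hq1 : q < 1) {n : ℕ} (hn : 1 ≤ n) : 0 < 1 - q ^ n :=
  sub_pos.mpr (pow_lt_one₀ hq0 hq1 (Nat.one_le_iff_ne_zero.mp hn))

theorem psiPQDeriv_nonneg (hq0 : 0 ≤ q) (hq1 : q < 1) (hm : Odd m) (t : ℝ) :
    0 ≤ psiPQDeriv p q m t := by
  refine mul_nonneg (hm.add_one.pow_nonneg _) (sum_nonneg fun n hn => ?_)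
  have := one_sub_pow_pos hq0 hq1 (mem_Icc.mp hn).1
  positivity

theorem psiPQDeriv_antitone (hq0 : 0 < q) (hq1 : q < 1) (hm : Odd m) :
    Antitone (psiPQDeriv p q m) := by
  intro s t hst
  refine mul_le_mul_of_nonneg_left (sum_le_sum fun n hn => ?_) (hm.add_one.pow_nonneg _)
  have := one_sub_pow_pos hq0.le hq1 (mem_Icc.mp hn).1
  have hq_pow : q ^ ((n : ℝ) * t) ≤ q ^ ((n : ℝ) * s) :=
    Real.rpow_le_rpow_of_exponent_ge hq0 hq1.le (by gcongr)
  gcongr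

end

theorem psiPQDeriv_odd_add_le_general (p : ℕ) (q : ℝ) (hq : q ∈ Set.Ioo (0 : ℝ) 1)
    (s t : ℝ) (ht : 0 < t) (m : ℕ) (hodd : Odd m) :
    psiPQDeriv p q m (s + t) ≤ psiPQDeriv p q m s + psiPQDeriv p q m t :=
  calc psiPQDeriv p q m (s + t)
      ≤ psiPQDeriv p q m s := psiPQDeriv_antitone hq.1 hq.2 hodd (le_add_of_nonneg_right ht.le)
    _ ≤ psiPQDeriv p q m s + psiPQDeriv p q m t :=
      le_add_of_nonneg_right (psiPQDeriv_nonneg hq.1.le hq.2 hodd t)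

theorem psiPQDeriv_odd_add_le (p : ℕ) (hp : 0 < p) (q : ℝ) (hq : q ∈ Set.Ioo (0 : ℝ) 1)
    (s t : ℝ) (hs : 0 < s) (ht : 0 < t) (m : ℕ) (hm : 0 < m) (hodd : Odd m) :
    psiPQDeriv p q m (s + t) ≤ psiPQDeriv p q m s + psiPQDeriv p q m t :=
  psiPQDeriv_odd_add_le_general p q hq s t ht m hodd
end

section
/- Let p be a positive integer, q ∈ (0,1), s, t > 0, and let m be a positive even integer. Then ψ_{p,q}^{(m)}(s+t) ≥ ψ_{p,q}^{(m)}(s) + ψ_{p,q}^{(m)}(t). -/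
/-! For `q ∈ (0,1)` and `t ≥ 0` we have `q ^ t ≤ 1`, so
`q ^ (x + t) = q ^ x * q ^ t ≤ q ^ x + q ^ t`. The coefficients `n ^ m / (1 - q ^ n)` are
nonnegative, so the sum defining `ψ_{p,q}^{(m)}` is subadditive in its argument, and multiplying
by `(log q) ^ (m + 1) ≤ 0` (an odd power of a negative number) reverses the inequality. -/

open Finset

lemma Real.rpow_add_le_rpow_add_rpow {q : ℝ} (hq0 : 0 < q) (hq1 : q ≤ 1) (x : ℝ) {t : ℝ}
    (ht : 0 ≤ t) : q ^ (x + t) ≤ q ^ x + q ^ t := by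
  rw [Real.rpow_add hq0]
  calc q ^ x * q ^ t ≤ q ^ x :=
        mul_le_of_le_one_right (by positivity) (Real.rpow_le_one hq0.le hq1 ht)
    _ ≤ q ^ x + q ^ t := le_add_of_nonneg_right (by positivity)

lemma psiPQDeriv_summand_add_le {q : ℝ} (hq : q ∈ Set.Ioo (0 : ℝ) 1) (m : ℕ) {n : ℕ}
    (hn : 1 ≤ n) (s : ℝ) {t : ℝ} (ht : 0 ≤ t) :
    (n : ℝ) ^ m * q ^ ((n : ℝ) * (s + t)) / (1 - q ^ n) ≤
      (n : ℝ) ^ m * q ^ ((n : ℝ) * s) / (1 - q ^ n) +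
        (n : ℝ) ^ m * q ^ ((n : ℝ) * t) / (1 - q ^ n) := by
  obtain ⟨hq0, hq1⟩ := hq
  have hden : 0 < 1 - q ^ n := sub_pos.2 (pow_lt_one₀ hq0.le hq1 (by omega))
  rw [← add_div, ← mul_add, mul_add (n : ℝ)]
  gcongr
  exact Real.rpow_add_le_rpow_add_rpow hq0 hq1.le _ (by positivity)

lemma Real.log_pow_succ_nonpos_of_even {q : ℝ} (hq0 : 0 < q) (hq1 : q < 1) {m : ℕ}
    (hm : Even m) : Real.log q ^ (m + 1) ≤ 0 :=
  hm.add_one.pow_nonpos (Real.log_neg hq0 hq1).le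

theorem psiPQDeriv_even_add_ge_general (p : ℕ) (q : ℝ) (hq : q ∈ Set.Ioo (0 : ℝ) 1)
    (s t : ℝ) (ht : 0 < t) (m : ℕ) (heven : Even m) :
    psiPQDeriv p q m (s + t) ≥ psiPQDeriv p q m s + psiPQDeriv p q m t := by
  have hsum : ∑ n ∈ Icc 1 p, (n : ℝ) ^ m * q ^ ((n : ℝ) * (s + t)) / (1 - q ^ n) ≤
      ∑ n ∈ Icc 1 p, ((n : ℝ) ^ m * q ^ ((n : ℝ) * s) / (1 - q ^ n) +
        (n : ℝ) ^ m * q ^ ((n : ℝ) * t) / (1 - q ^ n)) :=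
    sum_le_sum fun n hn ↦ psiPQDeriv_summand_add_le hq m (mem_Icc.1 hn).1 s ht.le
  unfold psiPQDeriv
  rw [ge_iff_le, ← mul_add, ← sum_add_distrib]
  exact mul_le_mul_of_nonpos_left hsum (Real.log_pow_succ_nonpos_of_even hq.1 hq.2 heven)

theorem psiPQDeriv_even_add_ge (p : ℕ) (hp : 0 < p) (q : ℝ) (hq : q ∈ Set.Ioo (0 : ℝ) 1)
    (s t : ℝ) (hs : 0 < s) (ht : 0 < t) (m : ℕ) (hm : 0 < m) (heven : Even m) :
    psiPQDeriv p q m (s + t) ≥ psiPQDeriv p q m s + psiPQDeriv p q m t :=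
  psiPQDeriv_even_add_ge_general p q hq s t ht m heven
end

section
/- Let p be a positive integer, q ∈ (0,1), s, t > 0, and let m be a positive odd integer. Then ψ_{p,q}^{(m)}(s) ≥ ψ_{p,q}^{(m)}(s+t) ≥ 0; that is, ψ_{p,q}^{(m)} is nonnegative on (0,∞) and nonincreasing in the sense that increasing the argument by t > 0 does not increase its value. -/
/-!
Every summand `n ^ m * q ^ (n t) / (1 - q ^ n)` is nonnegative and nonincreasing in `t`, because
`0 < q < 1`; for odd `m` the prefactor `(log q) ^ (m + 1)` is an even power, hence nonnegative.
-/

open Finset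

section

variable {p m : ℕ} {q : ℝ}

theorem psiPQDeriv_summand_nonneg (hq0 : 0 ≤ q) (hq1 : q ≤ 1) (n : ℕ) (t : ℝ) :
    0 ≤ (n : ℝ) ^ m * q ^ ((n : ℝ) * t) / (1 - q ^ n) :=
  div_nonneg (by positivity) (sub_nonneg.mpr (pow_le_one₀ hq0 hq1))

theorem antitone_psiPQDeriv_summand (hq0 : 0 < q) (hq1 : q ≤ 1) (n : ℕ) :
    Antitone fun t : ℝ => (n : ℝ) ^ m * q ^ ((n : ℝ) * t) / (1 - q ^ n) := by
  intro s t hst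
  have hpow : q ^ ((n : ℝ) * t) ≤ q ^ ((n : ℝ) * s) :=
    Real.antitone_rpow_of_base_le_one hq0 hq1 (by gcongr)
  exact div_le_div_of_nonneg_right (mul_le_mul_of_nonneg_left hpow (by positivity))
    (sub_nonneg.mpr (pow_le_one₀ hq0.le hq1))

theorem log_pow_succ_nonneg_of_odd (hm : Odd m) (q : ℝ) : 0 ≤ Real.log q ^ (m + 1) :=
  hm.add_one.pow_nonneg _

theorem psiPQDeriv_nonneg_of_odd (hq0 : 0 ≤ q) (hq1 : q ≤ 1) (hm : Odd m) (t : ℝ) :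
    0 ≤ psiPQDeriv p q m t :=
  mul_nonneg (log_pow_succ_nonneg_of_odd hm q)
    (sum_nonneg fun n _ => psiPQDeriv_summand_nonneg hq0 hq1 n t)

theorem antitone_psiPQDeriv_of_odd (hq0 : 0 < q) (hq1 : q ≤ 1) (hm : Odd m) :
    Antitone (psiPQDeriv p q m) := by
  intro s t hst
  exact mul_le_mul_of_nonneg_left
    (sum_le_sum fun n _ => antitone_psiPQDeriv_summand hq0 hq1 n hst)
    (log_pow_succ_nonneg_of_odd hm q)

end

theorem psiPQDeriv_odd_antitone_nonneg_general (p : ℕ) (q : ℝ)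
    (hq : q ∈ Set.Ioo (0 : ℝ) 1) (s t : ℝ) (ht : 0 < t)
    (m : ℕ) (hodd : Odd m) :
    psiPQDeriv p q m s ≥ psiPQDeriv p q m (s + t) ∧ psiPQDeriv p q m (s + t) ≥ 0 := by
  obtain ⟨hq0, hq1⟩ := hq
  exact ⟨antitone_psiPQDeriv_of_odd hq0 hq1.le hodd (by linarith),
    psiPQDeriv_nonneg_of_odd hq0.le hq1.le hodd (s + t)⟩

theorem psiPQDeriv_odd_antitone_nonneg (p : ℕ) (hp : 0 < p) (q : ℝ)
    (hq : q ∈ Set.Ioo (0 : ℝ) 1) (s t : ℝ) (hs : 0 < s) (ht : 0 < t)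
    (m : ℕ) (hm : 0 < m) (hodd : Odd m) :
    psiPQDeriv p q m s ≥ psiPQDeriv p q m (s + t) ∧ psiPQDeriv p q m (s + t) ≥ 0 :=
  psiPQDeriv_odd_antitone_nonneg_general p q hq s t ht m hodd
end
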